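/- Let ℓ be a positive integer, and let S be a signature of Q_n such that ε_k(S) ≥ ℓ for all 1 ≤ k < n. Let X_1, ..., X_ℓ be distinct nonempty vertices of Q_n, and let x_t ∈ X_t for each t. Then there is an upright spanning tree T of Q_n with signature S such that ψ_T(X_t) = x_t for 1 ≤ t ≤ ℓ. -/

import Mathlib

open SimpleGraph

/-- The `n`-cube: vertices are the subsets of `[n]` (modelled as `Finset (Fin n)`),
with an edge between `X` and `Y` iff their symmetric difference is a singleton. -/
def cube (n : ℕ) : SimpleGraph (Finset (Fin n)) where
  Adj X Y := (symmDiff X Y).card = 1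
  symm := by
    constructor
    intro X Y h
    rwa [symmDiff_comm]
  loopless := by
    constructor
    intro X h
    simp [symmDiff_self, Finset.bot_eq_empty] at h

/-- `T` is a spanning tree of `G` (both graphs on the same vertex set). -/
def IsSpanningTreeOf {V : Type*} (T G : SimpleGraph V) : Prop :=
  T ≤ G ∧ T.IsTree

/-- The edge `e` of the `n`-cube is in direction `i`. -/
def edgeInDir {n : ℕ} (i : Fin n) (e : Sym2 (Finset (Fin n))) : Prop :=
  ∃ X : Finset (Fin n), e = s(X, symmDiff X {i})

/-- The number of edges of `T` in direction `i`. -/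
noncomputable def dirCount {n : ℕ} (T : SimpleGraph (Finset (Fin n))) (i : Fin n) : ℕ :=
  {e | e ∈ T.edgeSet ∧ edgeInDir i e}.ncard

/-- `a` is the signature of the tree `T`. -/
def HasSig {n : ℕ} (T : SimpleGraph (Finset (Fin n))) (a : Fin n → ℕ) : Prop :=
  ∀ i, dirCount T i = a i

/-- `a` is a signature of `Q_n`, i.e. the signature of some spanning tree of the `n`-cube. -/
def IsSignature (n : ℕ) (a : Fin n → ℕ) : Prop :=
  ∃ T, IsSpanningTreeOf T (cube n) ∧ HasSig T a

/-- A section of the set of nonempty subsets of `[n]`. -/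
def IsSection {n : ℕ} (ψ : Finset (Fin n) → Fin n) : Prop :=
  ∀ X : Finset (Fin n), X.Nonempty → ψ X ∈ X

/-- The number of nonempty subsets on which the section `ψ` takes the value `i`. -/
noncomputable def secCount {n : ℕ} (ψ : Finset (Fin n) → Fin n) (i : Fin n) : ℕ :=
  {X : Finset (Fin n) | X.Nonempty ∧ ψ X = i}.ncard

/-- The tuple `a` reduces over `R` : `Σ_{i ∈ R} a i = 2^|R| - 1`. -/
def ReducesOver {n : ℕ} (a : Fin n → ℕ) (R : Finset (Fin n)) : Prop :=
  ∑ i ∈ R, a i = 2 ^ R.card - 1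

/-- `a` is reducible: it reduces over some proper nonempty subset of `[n]`. -/
def IsReducibleSig {n : ℕ} (a : Fin n → ℕ) : Prop :=
  ∃ R : Finset (Fin n), R.Nonempty ∧ R ≠ Finset.univ ∧ ReducesOver a R

/-- `a` is irreducible. -/
def IsIrreducibleSig {n : ℕ} (a : Fin n → ℕ) : Prop := ¬ IsReducibleSig a

/-- `T` is upright: every vertex `X` is at distance `|X|` in `T` from the root `∅`. -/
def IsUpright {n : ℕ} (T : SimpleGraph (Finset (Fin n))) : Prop :=
  ∀ X : Finset (Fin n), T.dist X ∅ = X.card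

/-- `ψ` is the section associated to the upright tree `T`: for each nonempty `X`,
`ψ X ∈ X` and `X - {ψ X}` is the next vertex after `X` on the path in `T` from `X` to `∅`. -/
def IsTreeSection {n : ℕ} (T : SimpleGraph (Finset (Fin n))) (ψ : Finset (Fin n) → Fin n) : Prop :=
  ∀ X : Finset (Fin n), X.Nonempty → ψ X ∈ X ∧ T.Adj X (X.erase (ψ X))

/-- The minimum of `Σ_{i ∈ K} a i` over the sets `K` of `k` directions. -/
noncomputable def minSum {n : ℕ} (a : Fin n → ℕ) (k : ℕ) : ℕ :=
  sInf {m : ℕ | ∃ K : Finset (Fin n), K.card = k ∧ ∑ i ∈ K, a i = m}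

/-- The excess of `a` at `k`. -/
noncomputable def excess {n : ℕ} (a : Fin n → ℕ) (k : ℕ) : ℤ :=
  (minSum a k : ℤ) - (2 ^ k - 1)

/-- The result of sliding the edge `e` in direction `i`. -/
def slideEdge {n : ℕ} (i : Fin n) (e : Sym2 (Finset (Fin n))) : Sym2 (Finset (Fin n)) :=
  Sym2.map (fun X => symmDiff X {i}) e

/-- The edge `e` of the spanning tree `T` of `Q_n` is `i`-slidable. -/
def Slidable (n : ℕ) (T : SimpleGraph (Finset (Fin n))) (i : Fin n)
    (e : Sym2 (Finset (Fin n))) : Prop :=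
  e ∈ T.edgeSet ∧
    IsSpanningTreeOf (SimpleGraph.fromEdgeSet ((T.edgeSet \ {e}) ∪ {slideEdge i e})) (cube n)

/-- The edge set `E` is (the edge set of) a spanning tree of the subgraph of the
`n`-cube induced on the vertex set `s`. -/
def IsSpanningTreeOn (n : ℕ) (s : Set (Finset (Fin n))) (E : Set (Sym2 (Finset (Fin n)))) : Prop :=
  E ⊆ (cube n).edgeSet ∧ (∀ e ∈ E, ∀ v ∈ e, v ∈ s) ∧
    ((SimpleGraph.fromEdgeSet E).induce s).IsTree

/-- The edges of `T` with both endpoints in `s`. -/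
def edgesWithin {n : ℕ} (s : Set (Finset (Fin n))) (T : SimpleGraph (Finset (Fin n))) :
    Set (Sym2 (Finset (Fin n))) :=
  {e | e ∈ T.edgeSet ∧ ∀ v ∈ e, v ∈ s}

/-- The edge `e` of the tree with edge set `E`, spanning the subgraph of the `n`-cube
induced on `s`, is `i`-slidable. -/
def SlidableOn (n : ℕ) (s : Set (Finset (Fin n))) (E : Set (Sym2 (Finset (Fin n))))
    (i : Fin n) (e : Sym2 (Finset (Fin n))) : Prop :=
  e ∈ E ∧ IsSpanningTreeOn n s ((E \ {e}) ∪ {slideEdge i e})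

/-- The number of edges of `T` in direction `i` with both endpoints in `s`. -/
noncomputable def dirCountOn {n : ℕ} (s : Set (Finset (Fin n)))
    (T : SimpleGraph (Finset (Fin n))) (i : Fin n) : ℕ :=
  {e | e ∈ T.edgeSet ∧ edgeInDir i e ∧ ∀ v ∈ e, v ∈ s}.ncard

/-- `T'` is a spanning tree of the `n`-cube obtained from the spanning tree `T` by a
single edge slide. -/
def SlideStep (n : ℕ) (T T' : SimpleGraph (Finset (Fin n))) : Prop :=
  IsSpanningTreeOf T (cube n) ∧ IsSpanningTreeOf T' (cube n) ∧
    ∃ (i : Fin n) (e : Sym2 (Finset (Fin n))), e ∈ T.edgeSet ∧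
      T' = SimpleGraph.fromEdgeSet ((T.edgeSet \ {e}) ∪ {slideEdge i e})

/-- The trees `T` and `T'` are related by a single edge slide. -/
def SlideAdj (n : ℕ) (T T' : SimpleGraph (Finset (Fin n))) : Prop :=
  T ≠ T' ∧ ∃ (i : Fin n) (e : Sym2 (Finset (Fin n))),
    (e ∈ T.edgeSet ∧ T' = SimpleGraph.fromEdgeSet ((T.edgeSet \ {e}) ∪ {slideEdge i e})) ∨
    (e ∈ T'.edgeSet ∧ T = SimpleGraph.fromEdgeSet ((T'.edgeSet \ {e}) ∪ {slideEdge i e}))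

/-- The spanning trees of the `n`-cube. -/
def SpanningTrees (n : ℕ) := {T : SimpleGraph (Finset (Fin n)) // IsSpanningTreeOf T (cube n)}

/-- The edge slide graph `E(n)` of the `n`-cube. -/
def eslide (n : ℕ) : SimpleGraph (SpanningTrees n) where
  Adj T T' := SlideAdj n T.1 T'.1
  symm := by
    constructor
    rintro T T' ⟨hne, i, e, h⟩
    exact ⟨hne.symm, i, e, h.symm⟩
  loopless := by
    constructor
    rintro T ⟨hne, -⟩
    exact hne rfl

/-- The projection `π_R(T)` of `T` to `Q_R`: a graph on the subsets of `R`, with `A`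
adjacent to `B` iff some edge of `T` projects to `{A, B}`. -/
def projTree (n : ℕ) (R : Finset (Fin n)) (T : SimpleGraph (Finset (Fin n))) :
    SimpleGraph ↥{W : Finset (Fin n) | W ⊆ R} where
  Adj A B := A.1 ≠ B.1 ∧ ∃ U V : Finset (Fin n), T.Adj U V ∧ U ∩ R = A.1 ∧ V ∩ R = B.1
  symm := by
    constructor
    rintro A B ⟨hne, U, V, hUV, hU, hV⟩
    exact ⟨hne.symm, V, U, hUV.symm, hV, hU⟩
  loopless := by
    constructor
    rintro A ⟨hne, -⟩
    exact hne rfl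

/-- The projected edge set `π_R(T)`: images under `π_R` of the edges of `T` in
directions belonging to `R`. -/
def projEdges {n : ℕ} (R : Finset (Fin n)) (T : SimpleGraph (Finset (Fin n))) :
    Set (Sym2 (Finset (Fin n))) :=
  {f | ∃ e ∈ T.edgeSet, (∃ i ∈ R, edgeInDir i e) ∧ f = Sym2.map (· ∩ R) e}

/-- The decomposition `T ↦ (F_T, (T(R,X))_{X ⊆ R})` of a tree reducing over `R`. -/
def decompose (n : ℕ) (R : Finset (Fin n)) (T : SimpleGraph (Finset (Fin n))) :
    Set (Sym2 (Finset (Fin n))) ×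
      ((X : Finset (Fin n)) → X ⊆ R → SimpleGraph ↥{W : Finset (Fin n) | W ∩ R = X}) :=
  ⟨{e | e ∈ T.edgeSet ∧ ∃ i ∈ R, edgeInDir i e},
   fun X _ => T.induce {W : Finset (Fin n) | W ∩ R = X}⟩

/-- `s` is the least index such that `ε_k(a) = 0` for all `s ≤ k ≤ n`; i.e. the
entries of (an ordered) `a` with index `≤ s` form the unsaturated part of `a`. -/
def UnsatIndex (n : ℕ) (a : Fin n → ℕ) (s : ℕ) : Prop :=
  (∀ k, s ≤ k → k ≤ n → excess a k = 0) ∧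
    ∀ s' < s, ¬ (∀ k, s' ≤ k → k ≤ n → excess a k = 0)

/-- The restriction of `a` to its first `s` entries is reducible (as a tuple of length `s`). -/
def ReducibleBelow {n : ℕ} (a : Fin n → ℕ) (s : ℕ) : Prop :=
  ∃ R : Finset (Fin n), R.Nonempty ∧ (∀ i ∈ R, (i : ℕ) < s) ∧ R.card < s ∧
    ∑ i ∈ R, a i = 2 ^ R.card - 1

/-- `a` is strictly reducible: it is reducible and its unsaturated part is reducible. -/
def StrictlyReducible (n : ℕ) (a : Fin n → ℕ) : Prop :=
  IsReducibleSig a ∧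
    ∃ (σ : Equiv.Perm (Fin n)) (s : ℕ), Monotone (a ∘ σ) ∧
      UnsatIndex n (a ∘ σ) s ∧ ReducibleBelow (a ∘ σ) s

/-!
A section `ψ` (a choice of `ψ X ∈ X` for every nonempty `X`) determines the graph joining each
nonempty `X` to `X - {ψ X}`. It has `2^n - 1` edges and every `X` reaches `∅` along a path of
length `|X|`, so it is an upright spanning tree with section `ψ`, and its edges in direction `i`
correspond to the sets `X` with `ψ X = i`. It therefore suffices to find a section taking each
value `i` exactly `a i` times and with `ψ (X t) = x t`: a Hall matching of the nonempty sets into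
`a i` copies of each direction `i`, where `X t` may only use `x t` and any other `Z` may use its
elements. If the allowed directions of a family of sets form `K`, at most `ℓ` of the sets are
prescribed and the others are nonempty subsets of `K`, so Hall's condition follows from
`ℓ + 2^|K| - 1 ≤ ∑_{i ∈ K} a i`, i.e. `ε_{|K|}(a) ≥ ℓ`, when `|K| < n`, and from
`∑ a i = 2^n - 1` when `K = [n]`.
-/

open Finset

section CubeWalks

variable {n : ℕ}

theorem card_le_card_add_one_of_cube_adj {X Y : Finset (Fin n)} (h : (cube n).Adj X Y) :
    #X ≤ #Y + 1 := by
  have hsdiff : X \ Y ⊆ symmDiff X Y := fun i hi => mem_symmDiff.mpr (Or.inl (mem_sdiff.mp hi))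
  have hcard : #(symmDiff X Y) = 1 := h
  calc #X ≤ #(X \ Y) + #Y := card_le_card_sdiff_add_card
    _ ≤ #(symmDiff X Y) + #Y := by gcongr
    _ = #Y + 1 := by rw [hcard, add_comm]

theorem card_le_length_add_card {G : SimpleGraph (Finset (Fin n))} (hG : G ≤ cube n)
    {X Y : Finset (Fin n)} (w : G.Walk X Y) : #X ≤ w.length + #Y := by
  induction w with
  | nil => simp
  | cons h _ ih =>
    have := card_le_card_add_one_of_cube_adj (hG h)
    rw [Walk.length_cons]
    omega

end CubeWalks

theorem Finset.symmDiff_erase_self {α : Type*} [DecidableEq α] {s : Finset α} {a : α}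
    (h : a ∈ s) : symmDiff s (s.erase a) = {a} := by
  ext b
  by_cases hb : b = a <;> simp [mem_symmDiff, hb, h]

theorem Finset.ncard_setOf_nonempty {α : Type*} [Fintype α] :
    {s : Finset α | s.Nonempty}.ncard = 2 ^ Fintype.card α - 1 := by
  have : {s : Finset α | s.Nonempty} = {∅}ᶜ := by
    ext s
    simp [nonempty_iff_ne_empty]
  rw [this, Set.ncard_compl, Set.ncard_singleton, Nat.card_eq_fintype_card, Fintype.card_finset]

theorem Fintype.card_subtype_nonempty {α : Type*} [Fintype α] :
    Fintype.card {s : Finset α // s.Nonempty} = 2 ^ Fintype.card α - 1 := by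
  rw [← Nat.card_eq_fintype_card, ← Set.coe_ofPred, Nat.card_coe_set_eq, ncard_setOf_nonempty]

section Directions

variable {n : ℕ}

theorem edgeInDir_mk_iff {i : Fin n} {U V : Finset (Fin n)} :
    edgeInDir i s(U, V) ↔ symmDiff U V = {i} := by
  constructor
  · rintro ⟨Z, hZ⟩
    rcases Sym2.eq_iff.mp hZ with ⟨rfl, rfl⟩ | ⟨rfl, rfl⟩
    · exact symmDiff_symmDiff_cancel_left U {i}
    · rw [symmDiff_comm]
      exact symmDiff_symmDiff_cancel_left V {i}
  · intro h
    exact ⟨U, by rw [← h, symmDiff_symmDiff_cancel_left]⟩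

theorem existsUnique_edgeInDir {e : Sym2 (Finset (Fin n))} (he : e ∈ (cube n).edgeSet) :
    ∃! i, edgeInDir i e := by
  induction e using Sym2.ind with
  | _ U V =>
    obtain ⟨i, hi⟩ := card_eq_one.mp (show #(symmDiff U V) = 1 from he)
    refine ⟨i, edgeInDir_mk_iff.mpr hi, fun j hj => ?_⟩
    exact singleton_injective ((edgeInDir_mk_iff.mp hj).symm.trans hi)

theorem sum_dirCount {T : SimpleGraph (Finset (Fin n))} (hT : T ≤ cube n) :
    ∑ i, dirCount T i = T.edgeSet.ncard := by
  classical
  have hdir (i : Fin n) : dirCount T i = #{e ∈ T.edgeFinset | edgeInDir i e} := by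
    rw [dirCount, ← Set.ncard_coe_finset]
    congr
    ext e
    simp
  calc ∑ i, dirCount T i = ∑ i, #(bipartiteAbove edgeInDir T.edgeFinset i) := by
        simp_rw [hdir]
        rfl
    _ = ∑ e ∈ T.edgeFinset, #(bipartiteBelow edgeInDir univ e) :=
      sum_card_bipartiteAbove_eq_sum_card_bipartiteBelow _
    _ = ∑ e ∈ T.edgeFinset, 1 := by
      refine sum_congr rfl fun e he => card_eq_one.mpr ?_
      obtain ⟨i, hi, huniq⟩ := existsUnique_edgeInDir (edgeSet_mono hT (mem_edgeFinset.mp he))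
      exact ⟨i, by ext j; simpa [bipartiteBelow] using ⟨huniq j, fun h => h ▸ hi⟩⟩
    _ = T.edgeSet.ncard := by rw [← card_eq_sum_ones, ← Set.ncard_coe_finset, coe_edgeFinset]

theorem HasSig.sum_eq {T : SimpleGraph (Finset (Fin n))} {a : Fin n → ℕ}
    (hT : IsSpanningTreeOf T (cube n)) (ha : HasSig T a) : ∑ i, a i = 2 ^ n - 1 := by
  have hcard := (isTree_iff_connected_and_card.mp hT.2).2
  rw [Nat.card_coe_set_eq, ← sum_dirCount hT.1, Nat.card_eq_fintype_card, Fintype.card_finset,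
    Fintype.card_fin] at hcard
  have hsum : ∑ i, a i = ∑ i, dirCount T i := sum_congr rfl fun i _ => (ha i).symm
  omega

end Directions

section SectionTree

variable {n : ℕ} {ψ : Finset (Fin n) → Fin n}

def parentEdge (ψ : Finset (Fin n) → Fin n) (X : Finset (Fin n)) : Sym2 (Finset (Fin n)) :=
  s(X, X.erase (ψ X))

def sectionTree (ψ : Finset (Fin n) → Fin n) : SimpleGraph (Finset (Fin n)) :=
  fromEdgeSet (parentEdge ψ '' {X | X.Nonempty})

theorem sectionTree_adj_erase (hψ : IsSection ψ) {X : Finset (Fin n)} (hX : X.Nonempty) :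
    (sectionTree ψ).Adj X (X.erase (ψ X)) :=
  (fromEdgeSet_adj _).mpr ⟨⟨X, hX, rfl⟩, (erase_ne_self.mpr (hψ X hX)).symm⟩

theorem sectionTree_isTreeSection (hψ : IsSection ψ) : IsTreeSection (sectionTree ψ) ψ :=
  fun X hX => ⟨hψ X hX, sectionTree_adj_erase hψ hX⟩

theorem sectionTree_edgeSet (hψ : IsSection ψ) :
    (sectionTree ψ).edgeSet = parentEdge ψ '' {X | X.Nonempty} := by
  rw [sectionTree, edgeSet_fromEdgeSet, _root_.sdiff_eq_left, Set.disjoint_left]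
  rintro _ ⟨X, hX, rfl⟩ hdiag
  exact erase_ne_self.mpr (hψ X hX) (Sym2.mk_isDiag_iff.mp hdiag).symm

theorem sectionTree_le_cube (hψ : IsSection ψ) : sectionTree ψ ≤ cube n := by
  intro Y Z h
  rw [← mem_edgeSet, sectionTree_edgeSet hψ] at h
  obtain ⟨X, hX, he⟩ := h
  have hadj : (cube n).Adj X (X.erase (ψ X)) := by
    show #(symmDiff X _) = 1
    rw [symmDiff_erase_self (hψ X hX), card_singleton]
  rcases Sym2.eq_iff.mp he with ⟨rfl, rfl⟩ | ⟨rfl, rfl⟩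
  exacts [hadj, hadj.symm]

theorem parentEdge_injOn (hψ : IsSection ψ) : Set.InjOn (parentEdge ψ) {X | X.Nonempty} := by
  intro X hX Y hY h
  rcases Sym2.eq_iff.mp h with ⟨hXY, -⟩ | ⟨hXY, hYX⟩
  · exact hXY
  · have hX' := card_erase_lt_of_mem (hψ X hX)
    have hY' := card_erase_lt_of_mem (hψ Y hY)
    rw [hYX] at hX'
    rw [← hXY] at hY'
    omega

theorem exists_sectionTree_walk (hψ : IsSection ψ) (X : Finset (Fin n)) :
    ∃ w : (sectionTree ψ).Walk X ∅, w.length = #X := by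
  induction hk : #X generalizing X with
  | zero =>
    rw [card_eq_zero] at hk
    exact hk ▸ ⟨.nil, rfl⟩
  | succ k ih =>
    have hX : X.Nonempty := card_pos.mp (by omega)
    obtain ⟨w, hw⟩ := ih (X.erase (ψ X)) (by rw [card_erase_of_mem (hψ X hX), hk]; rfl)
    exact ⟨.cons (sectionTree_adj_erase hψ hX) w, by rw [Walk.length_cons, hw]⟩

theorem sectionTree_isUpright (hψ : IsSection ψ) : IsUpright (sectionTree ψ) := by
  intro X
  obtain ⟨w, hw⟩ := exists_sectionTree_walk hψ X
  obtain ⟨p, hp⟩ := Reachable.exists_walk_length_eq_dist ⟨w⟩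
  have := card_le_length_add_card (sectionTree_le_cube hψ) p
  rw [card_empty, add_zero, hp] at this
  exact le_antisymm (hw ▸ dist_le w) this

theorem sectionTree_isTree (hψ : IsSection ψ) : (sectionTree ψ).IsTree := by
  refine isTree_iff_connected_and_card.mpr ⟨?_, ?_⟩
  · refine (connected_iff_exists_forall_reachable _).mpr ⟨∅, fun X => ?_⟩
    obtain ⟨w, -⟩ := exists_sectionTree_walk hψ X
    exact ⟨w.reverse⟩
  · rw [Nat.card_coe_set_eq, sectionTree_edgeSet hψ, (parentEdge_injOn hψ).ncard_image,
      ncard_setOf_nonempty, Nat.card_eq_fintype_card, Fintype.card_finset]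
    exact Nat.sub_add_cancel Nat.one_le_two_pow

theorem edgeInDir_parentEdge {X : Finset (Fin n)} (hX : ψ X ∈ X) {i : Fin n} :
    edgeInDir i (parentEdge ψ X) ↔ ψ X = i := by
  rw [parentEdge, edgeInDir_mk_iff, symmDiff_erase_self hX, singleton_inj]

theorem dirCount_sectionTree (hψ : IsSection ψ) (i : Fin n) :
    dirCount (sectionTree ψ) i = secCount ψ i := by
  have hdir : {e | e ∈ (sectionTree ψ).edgeSet ∧ edgeInDir i e} =
      parentEdge ψ '' {X | X.Nonempty ∧ ψ X = i} := by
    ext e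
    rw [sectionTree_edgeSet hψ]
    constructor
    · rintro ⟨⟨X, hX, rfl⟩, hdir⟩
      exact ⟨X, ⟨hX, (edgeInDir_parentEdge (hψ X hX)).mp hdir⟩, rfl⟩
    · rintro ⟨X, ⟨hX, rfl⟩, rfl⟩
      exact ⟨⟨X, hX, rfl⟩, (edgeInDir_parentEdge (hψ X hX)).mpr rfl⟩
  rw [dirCount, hdir, ((parentEdge_injOn hψ).mono fun X hX => hX.1).ncard_image, secCount]

end SectionTree

section Hall

variable {ι α : Type*} [Fintype ι] [DecidableEq α]

theorem exists_fiber_card_le_of_hall (D : ι → Finset α) (c : α → ℕ)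
    (hall : ∀ s : Finset ι, #s ≤ ∑ i ∈ s.biUnion D, c i) :
    ∃ f : ι → α, (∀ z, f z ∈ D z) ∧ ∀ i, #{z | f z = i} ≤ c i := by
  -- Hall's theorem applied to `c i` copies `(i, 0), …, (i, c i - 1)` of each `i`.
  let copies : α → Finset (α × ℕ) := fun i => {i} ×ˢ range (c i)
  have hcopies (s : Finset ι) :
      #(s.biUnion fun z => (D z).biUnion copies) = ∑ i ∈ s.biUnion D, c i := by
    rw [← biUnion_biUnion, card_biUnion]
    · simp [copies]
    · intro i _ j _ hij
      exact disjoint_product.mpr (Or.inl (disjoint_singleton.mpr hij))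
  obtain ⟨g, hg, hgD⟩ := (all_card_le_biUnion_card_iff_exists_injective _).mp
    fun s => (hall s).trans (hcopies s).ge
  have hgD' (z : ι) : (g z).1 ∈ D z ∧ (g z).2 < c (g z).1 := by
    obtain ⟨i, hi, hgi⟩ := mem_biUnion.mp (hgD z)
    obtain ⟨hgi₁, hgi₂⟩ := mem_product.mp hgi
    rw [mem_singleton.mp hgi₁]
    exact ⟨hi, mem_range.mp hgi₂⟩
  refine ⟨fun z => (g z).1, fun z => (hgD' z).1, fun i => ?_⟩
  calc #{z | (g z).1 = i} ≤ #(range (c i)) := by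
        refine card_le_card_of_injOn (fun z => (g z).2) (fun z hz => ?_) fun z hz w hw h => ?_
        · have hz : (g z).1 = i := by simpa using hz
          simpa [← hz] using (hgD' z).2
        · have hz : (g z).1 = i := by simpa using hz
          have hw : (g w).1 = i := by simpa using hw
          exact hg (Prod.ext (hz.trans hw.symm) h)
    _ = c i := card_range _

theorem exists_fiber_card_eq_of_hall [Fintype α] (D : ι → Finset α) (c : α → ℕ)
    (hsum : ∑ i, c i = Fintype.card ι)
    (hall : ∀ s : Finset ι, #s ≤ ∑ i ∈ s.biUnion D, c i) :
    ∃ f : ι → α, (∀ z, f z ∈ D z) ∧ ∀ i, #{z | f z = i} = c i := by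
  obtain ⟨f, hfD, hle⟩ := exists_fiber_card_le_of_hall D c hall
  have htotal : ∑ i, #{z | f z = i} = ∑ i, c i := by
    rw [hsum, ← card_univ, card_eq_sum_card_fiberwise fun z _ => mem_univ (f z)]
  exact ⟨f, hfD, fun i => (sum_eq_sum_iff_of_le fun i _ => hle i).mp htotal i (mem_univ i)⟩

end Hall

section PrescribedSection

variable {n ℓ : ℕ}

theorem le_sum_of_le_excess {a : Fin n → ℕ} {m : ℕ} {K : Finset (Fin n)}
    (h : (m : ℤ) ≤ excess a #K) : m + (2 ^ #K - 1) ≤ ∑ i ∈ K, a i := by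
  have hmin : minSum a #K ≤ ∑ i ∈ K, a i := Nat.sInf_le ⟨K, rfl, rfl⟩
  have hpow : 1 ≤ 2 ^ #K := Nat.one_le_two_pow
  rw [excess] at h
  zify [hpow] at hmin ⊢
  linarith

/-- The directions allowed at `Z`: only `x t` if `Z = X t`, any element of `Z` otherwise. -/
noncomputable def allowedDirs (X : Fin ℓ → Finset (Fin n)) (x : Fin ℓ → Fin n)
    (Z : Finset (Fin n)) : Finset (Fin n) :=
  Function.extend X (fun t => {x t}) id Z

variable {X : Fin ℓ → Finset (Fin n)} {x : Fin ℓ → Fin n}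

theorem allowedDirs_apply (hX : Function.Injective X) (t : Fin ℓ) :
    allowedDirs X x (X t) = {x t} :=
  hX.extend_apply _ _ t

theorem allowedDirs_of_notMem_range {Z : Finset (Fin n)} (hZ : Z ∉ Set.range X) :
    allowedDirs X x Z = Z :=
  Function.extend_apply' _ _ _ hZ

theorem allowedDirs_subset (hX : Function.Injective X) (hx : ∀ t, x t ∈ X t)
    (Z : Finset (Fin n)) : allowedDirs X x Z ⊆ Z := by
  by_cases hZ : Z ∈ Set.range X
  · obtain ⟨t, rfl⟩ := hZ
    rw [allowedDirs_apply hX, singleton_subset_iff]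
    exact hx t
  · rw [allowedDirs_of_notMem_range hZ]

theorem allowedDirs_nonempty (hX : Function.Injective X) {Z : Finset (Fin n)}
    (hZ : Z.Nonempty) : (allowedDirs X x Z).Nonempty := by
  by_cases hZX : Z ∈ Set.range X
  · obtain ⟨t, rfl⟩ := hZX
    rw [allowedDirs_apply hX]
    exact singleton_nonempty _
  · rwa [allowedDirs_of_notMem_range hZX]

theorem card_le_add_two_pow_allowedDirs (s : Finset {Z : Finset (Fin n) // Z.Nonempty}) :
    #s ≤ ℓ + (2 ^ #(s.biUnion fun Z => allowedDirs X x Z) - 1) := by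
  set K := s.biUnion fun Z => allowedDirs X x Z
  -- a set of `s` is either one of the `ℓ` prescribed sets, or a nonempty subset of `K`
  have hmaps : Set.MapsTo Subtype.val (s : Set {Z : Finset (Fin n) // Z.Nonempty})
      (univ.image X ∪ K.powerset.erase ∅ : Finset (Finset (Fin n))) := by
    intro Z hZ
    by_cases hZX : Z.1 ∈ Set.range X
    · obtain ⟨t, ht⟩ := hZX
      exact mem_union_left _ (mem_image.mpr ⟨t, mem_univ t, ht⟩)
    · refine mem_union_right _ (mem_erase.mpr ⟨Z.2.ne_empty, mem_powerset.mpr ?_⟩)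
      rw [← allowedDirs_of_notMem_range (x := x) hZX]
      exact subset_biUnion_of_mem
        (fun Z : {Z : Finset (Fin n) // Z.Nonempty} => allowedDirs X x Z) hZ
  calc #s ≤ #(univ.image X ∪ K.powerset.erase ∅) :=
        card_le_card_of_injOn _ hmaps Subtype.val_injective.injOn
    _ ≤ #(univ.image X) + #(K.powerset.erase ∅) := card_union_le _ _
    _ ≤ ℓ + (2 ^ #K - 1) := by
      gcongr
      · exact card_image_le.trans (card_fin ℓ).le
      · rw [card_erase_of_mem (empty_mem_powerset K), card_powerset]

theorem card_le_sum_allowedDirs {a : Fin n → ℕ} (hsum : ∑ i, a i = 2 ^ n - 1)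
    (hex : ∀ k, 1 ≤ k → k < n → (ℓ : ℤ) ≤ excess a k) (hX : Function.Injective X)
    (s : Finset {Z : Finset (Fin n) // Z.Nonempty}) :
    #s ≤ ∑ i ∈ s.biUnion (fun Z => allowedDirs X x Z), a i := by
  set K := s.biUnion fun Z => allowedDirs X x Z
  rcases s.eq_empty_or_nonempty with rfl | hs
  · simp
  have hK : 1 ≤ #K := card_pos.mpr (hs.biUnion fun Z _ => allowedDirs_nonempty hX Z.2)
  rcases (card_le_univ K).lt_or_eq with hlt | heq
  · rw [Fintype.card_fin] at hlt
    exact card_le_add_two_pow_allowedDirs s |>.trans (le_sum_of_le_excess (hex _ hK hlt))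
  · rw [eq_univ_of_card K heq, hsum]
    calc #s ≤ Fintype.card {Z : Finset (Fin n) // Z.Nonempty} := card_le_univ s
      _ = 2 ^ n - 1 := by rw [Fintype.card_subtype_nonempty, Fintype.card_fin]

end PrescribedSection

theorem exists_isSection_extend {n : ℕ} [NeZero n]
    (f : {Z : Finset (Fin n) // Z.Nonempty} → Fin n) (hf : ∀ Z, f Z ∈ Z.1) :
    ∃ ψ : Finset (Fin n) → Fin n,
      IsSection ψ ∧ (∀ Z, ψ Z.1 = f Z) ∧ ∀ i, secCount ψ i = #{Z | f Z = i} := by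
  let ψ : Finset (Fin n) → Fin n := fun Z => if h : Z.Nonempty then f ⟨Z, h⟩ else 0
  have hψ (Z : {Z : Finset (Fin n) // Z.Nonempty}) : ψ Z.1 = f Z := dif_pos Z.2
  refine ⟨ψ, fun Z hZ => hψ ⟨Z, hZ⟩ ▸ hf ⟨Z, hZ⟩, hψ, fun i => ?_⟩
  have hfiber : {Z | Z.Nonempty ∧ ψ Z = i} = Subtype.val ''
      (({Z | f Z = i} : Finset _) : Set {Z : Finset (Fin n) // Z.Nonempty}) := by
    ext Z
    constructor
    · rintro ⟨hZ, rfl⟩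
      exact ⟨⟨Z, hZ⟩, by simp [hψ ⟨Z, hZ⟩], rfl⟩
    · rintro ⟨Z, hZ, rfl⟩
      exact ⟨Z.2, (hψ Z).trans (by simpa using hZ)⟩
  rw [secCount, hfiber, Subtype.val_injective.injOn.ncard_image, Set.ncard_coe_finset]

/-- Theorem: specifying a section at `ℓ` vertices. If `ε_k(a) ≥ ℓ` for
all `1 ≤ k < n` then for any `ℓ` distinct nonempty vertices `X_t` and choices `x_t ∈ X_t`
there is an upright spanning tree with signature `a` whose section sends each `X_t` to `x_t`. -/
theorem stmt5 (n ℓ : ℕ) (hℓ : 1 ≤ ℓ) (a : Fin n → ℕ) (hsig : IsSignature n a)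
    (hex : ∀ k, 1 ≤ k → k < n → (ℓ : ℤ) ≤ excess a k)
    (X : Fin ℓ → Finset (Fin n)) (hXne : ∀ t, (X t).Nonempty)
    (hXinj : Function.Injective X)
    (x : Fin ℓ → Fin n) (hx : ∀ t, x t ∈ X t) :
    ∃ (T : SimpleGraph (Finset (Fin n))) (ψ : Finset (Fin n) → Fin n),
      IsSpanningTreeOf T (cube n) ∧ IsUpright T ∧ HasSig T a ∧
        IsTreeSection T ψ ∧ ∀ t, ψ (X t) = x t := by
  obtain ⟨i₀, -⟩ := hXne ⟨0, hℓ⟩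
  have : NeZero n := ⟨i₀.pos.ne'⟩
  obtain ⟨T₀, hT₀, hT₀a⟩ := hsig
  have hsum := hT₀a.sum_eq hT₀
  obtain ⟨f, hfD, hfa⟩ := exists_fiber_card_eq_of_hall
    (fun Z : {Z : Finset (Fin n) // Z.Nonempty} => allowedDirs X x Z) a
    (by rw [hsum, Fintype.card_subtype_nonempty, Fintype.card_fin])
    (card_le_sum_allowedDirs hsum hex hXinj)
  obtain ⟨ψ, hψ, hψf, hψa⟩ :=
    exists_isSection_extend f fun Z => allowedDirs_subset hXinj hx Z (hfD Z)
  refine ⟨sectionTree ψ, ψ, ⟨sectionTree_le_cube hψ, sectionTree_isTree hψ⟩,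
    sectionTree_isUpright hψ, fun i => ?_, sectionTree_isTreeSection hψ, fun t => ?_⟩
  · rw [dirCount_sectionTree hψ, hψa, hfa]
  · have hft := hfD ⟨X t, hXne t⟩
    rw [allowedDirs_apply hXinj, mem_singleton] at hft
    exact (hψf ⟨X t, hXne t⟩).trans hft
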